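/- arXiv:2507.11018 — 4 statements merged into one kernel-verified Lean document; each statement's English description precedes it below -/
import Mathlib

section
/- There exists an optimal contract; that is, some implementable contract (s,p) satisfies Π_0(s,p) ≥ Π_0(s′,p′) for every implementable contract (s′,p′). -/
open Set Filter

/-- Principal's continuation value `Π_t(s,p) = Σ_{τ=t}^∞ δ^{τ−t}(π(s_τ) − p_τ)`. -/
noncomputable def PiVal (δ : ℝ) (π : ℝ → ℝ) (s p : ℕ → ℝ) (t : ℕ) : ℝ :=
  ∑' k : ℕ, δ ^ k * (π (s (t + k)) - p (t + k))

/-- Expert's continuation value `W_t(s,p) = Σ_{τ=t}^∞ δ^{τ−t}(w(s_τ) + p_τ)`. -/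
noncomputable def WVal (δ : ℝ) (w : ℝ → ℝ) (s p : ℕ → ℝ) (t : ℕ) : ℝ :=
  ∑' k : ℕ, δ ^ k * (w (s (t + k)) + p (t + k))

/-- A contract: `s` takes values in `[0,1]`, `s 0 = 0`, and `t ↦ δ^t·p_t` is summable. -/
def IsContract (δ : ℝ) (s p : ℕ → ℝ) : Prop :=
  (∀ t, s t ∈ Set.Icc (0 : ℝ) 1) ∧ s 0 = 0 ∧ Summable fun t => δ ^ t * p t

/-- Implementability: feasibility (monotone `s`, nonnegative `p`) plus (P-IC) and (E-IC). -/
def Implementable (δ : ℝ) (π w : ℝ → ℝ) (s p : ℕ → ℝ) : Prop :=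
  IsContract δ s p ∧ Monotone s ∧ (∀ t, 0 ≤ p t) ∧
  (∀ t, π (s t) / (1 - δ) ≤ PiVal δ π s p t) ∧
  (∀ t, w (s t) / (1 - δ) ≤ WVal δ w s p (t + 1))

/-- An optimal contract maximizes the principal's time-0 profit among implementable contracts. -/
def Optimal (δ : ℝ) (π w : ℝ → ℝ) (s p : ℕ → ℝ) : Prop :=
  Implementable δ π w s p ∧
  ∀ s' p' : ℕ → ℝ, Implementable δ π w s' p' → PiVal δ π s' p' 0 ≤ PiVal δ π s p 0

/-!
Payments of an implementable contract are bounded: if `|π| ≤ C` on `[0,1]`, the recursion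
`Π_t = π(s_t) - p_t + δ Π_{t+1}` together with (P-IC) at `t` and `Π_{t+1} ≤ C / (1 - δ)` gives
`p_t ≤ 2δC / (1 - δ)`. Hence the implementable contracts lie in a box `[0,1]^ℕ × [0,M]^ℕ`, which is
compact in the product topology. On this box the geometric weights make every discounted value
`Π_t`, `W_t` a uniformly convergent series of continuous functions, so (P-IC) and (E-IC) cut out a
closed, hence compact, set. It contains the trivial contract, and the continuous `Π_0` attains its
maximum on it.
-/

section Discounting

variable {δ : ℝ}

lemma summable_discounted_of_abs_le (hδ0 : 0 ≤ δ) (hδ1 : δ < 1) {a : ℕ → ℝ} {B : ℝ}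
    (hB : ∀ k, |a k| ≤ B) : Summable fun k => δ ^ k * a k := by
  refine Summable.of_norm_bounded ((summable_geometric_of_lt_one hδ0 hδ1).mul_right B) fun k => ?_
  rw [norm_mul, norm_pow, Real.norm_of_nonneg hδ0]
  exact mul_le_mul_of_nonneg_left (hB k) (pow_nonneg hδ0 k)

lemma tsum_discounted_const (hδ0 : 0 ≤ δ) (hδ1 : δ < 1) (c : ℝ) :
    ∑' k : ℕ, δ ^ k * c = c / (1 - δ) := by
  rw [tsum_mul_right, tsum_geometric_of_lt_one hδ0 hδ1, inv_mul_eq_div]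

lemma Summable.discounted_tail (hδ : δ ≠ 0) {a : ℕ → ℝ} (h : Summable fun n => δ ^ n * a n)
    (t : ℕ) : Summable fun k => δ ^ k * a (t + k) := by
  refine (((summable_nat_add_iff t).2 h).mul_left (δ ^ t)⁻¹).congr fun k => ?_
  rw [add_comm t k, pow_add]
  field_simp

lemma tsum_discounted_eq_add {a : ℕ → ℝ} {t : ℕ} (h : Summable fun k => δ ^ k * a (t + k)) :
    ∑' k : ℕ, δ ^ k * a (t + k) = a t + δ * ∑' k : ℕ, δ ^ k * a (t + 1 + k) := by
  rw [h.tsum_eq_zero_add, ← tsum_mul_left]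
  simp only [pow_zero, one_mul, add_zero, pow_succ, add_right_comm t 1, add_assoc t]
  congr 1
  exact tsum_congr fun k => by ring

end Discounting

section Contracts

variable {δ : ℝ} {π w : ℝ → ℝ} {s p : ℕ → ℝ} {C : ℝ}

lemma implementable_zero (hδ0 : 0 ≤ δ) (hδ1 : δ < 1) : Implementable δ π w 0 0 := by
  have hpi : ∀ t, PiVal δ π 0 0 t = π 0 / (1 - δ) := fun t => by
    simpa [PiVal] using tsum_discounted_const hδ0 hδ1 (π 0)
  have hW : ∀ t, WVal δ w 0 0 t = w 0 / (1 - δ) := fun t => by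
    simpa [WVal] using tsum_discounted_const hδ0 hδ1 (w 0)
  refine ⟨⟨fun _ => ⟨le_rfl, zero_le_one⟩, rfl, by simp⟩, monotone_const,
    fun _ => le_rfl, fun t => ?_, fun t => ?_⟩
  · rw [hpi]; rfl
  · rw [hW]; rfl

lemma IsContract.summable_piVal_terms (hc : IsContract δ s p) (hδ0 : 0 < δ) (hδ1 : δ < 1)
    (hC : ∀ x ∈ Icc (0 : ℝ) 1, |π x| ≤ C) (t : ℕ) :
    Summable fun k => δ ^ k * (π (s (t + k)) - p (t + k)) := by
  have hπ := summable_discounted_of_abs_le hδ0.le hδ1 fun k => hC _ (hc.1 (t + k))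
  simpa only [mul_sub] using hπ.sub (hc.2.2.discounted_tail hδ0.ne' t)

lemma IsContract.piVal_le (hc : IsContract δ s p) (hp : ∀ t, 0 ≤ p t) (hδ0 : 0 < δ)
    (hδ1 : δ < 1) (hC : ∀ x ∈ Icc (0 : ℝ) 1, |π x| ≤ C) (t : ℕ) :
    PiVal δ π s p t ≤ C / (1 - δ) := by
  rw [← tsum_discounted_const hδ0.le hδ1]
  refine (hc.summable_piVal_terms hδ0 hδ1 hC t).tsum_le_tsum (fun k => ?_)
    ((summable_geometric_of_lt_one hδ0.le hδ1).mul_right C)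
  have hπk := (le_abs_self _).trans (hC _ (hc.1 (t + k)))
  exact mul_le_mul_of_nonneg_left (by linarith [hp (t + k)]) (pow_nonneg hδ0.le k)

lemma Implementable.payment_le (h : Implementable δ π w s p) (hδ0 : 0 < δ) (hδ1 : δ < 1)
    (hC : ∀ x ∈ Icc (0 : ℝ) 1, |π x| ≤ C) (t : ℕ) :
    p t ≤ 2 * δ * C / (1 - δ) := by
  obtain ⟨hc, -, hp, hPIC, -⟩ := h
  have hrec : PiVal δ π s p t = π (s t) - p t + δ * PiVal δ π s p (t + 1) :=
    tsum_discounted_eq_add (a := fun n => π (s n) - p n) (hc.summable_piVal_terms hδ0 hδ1 hC t)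
  have hnext := hc.piVal_le hp hδ0 hδ1 hC (t + 1)
  have hIC := hPIC t
  have hπt := abs_le.1 (hC _ (hc.1 t))
  have h1δ : 0 < 1 - δ := sub_pos.2 hδ1
  rw [div_le_iff₀ h1δ] at hIC
  rw [le_div_iff₀ h1δ] at hnext
  rw [le_div_iff₀ h1δ]
  nlinarith

end Contracts

section Compactness

def contractBox (M : ℝ) : Set ((ℕ → ℝ) × (ℕ → ℝ)) :=
  (univ.pi fun _ => Icc 0 1) ×ˢ (univ.pi fun _ => Icc 0 M)

variable {δ : ℝ} {π w : ℝ → ℝ} {M : ℝ}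

lemma isCompact_contractBox (M : ℝ) : IsCompact (contractBox M) :=
  (isCompact_univ_pi fun _ => isCompact_Icc).prod (isCompact_univ_pi fun _ => isCompact_Icc)

lemma mapsTo_contractBox (n : ℕ) :
    MapsTo (fun c : (ℕ → ℝ) × (ℕ → ℝ) => (c.1 n, c.2 n)) (contractBox M)
      (Icc 0 1 ×ˢ Icc 0 M) :=
  fun _ hc => ⟨hc.1 n (mem_univ n), hc.2 n (mem_univ n)⟩

lemma isContract_of_mem_contractBox (hδ0 : 0 ≤ δ) (hδ1 : δ < 1) {c : (ℕ → ℝ) × (ℕ → ℝ)}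
    (hc : c ∈ contractBox M) (h0 : c.1 0 = 0) : IsContract δ c.1 c.2 := by
  refine ⟨fun t => (mapsTo_contractBox t hc).1, h0,
    summable_discounted_of_abs_le (B := M) hδ0 hδ1 fun t => ?_⟩
  obtain ⟨hp0, hpM⟩ := (mapsTo_contractBox t hc).2
  rwa [abs_of_nonneg hp0]

lemma continuousOn_tsum_discounted (hδ0 : 0 ≤ δ) (hδ1 : δ < 1) {h : ℝ × ℝ → ℝ}
    (hh : ContinuousOn h (Icc 0 1 ×ˢ Icc 0 M)) (t : ℕ) :
    ContinuousOn (fun c : (ℕ → ℝ) × (ℕ → ℝ) => ∑' k : ℕ, δ ^ k * h (c.1 (t + k), c.2 (t + k)))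
      (contractBox M) := by
  obtain ⟨B, hB⟩ := (isCompact_Icc.prod isCompact_Icc).exists_bound_of_continuousOn hh
  refine continuousOn_tsum (fun k => continuousOn_const.mul ?_)
    ((summable_geometric_of_lt_one hδ0 hδ1).mul_right B) fun k c hc => ?_
  · exact hh.comp (by fun_prop) (mapsTo_contractBox (t + k))
  · rw [norm_mul, norm_pow, Real.norm_of_nonneg hδ0]
    exact mul_le_mul_of_nonneg_left (hB _ (mapsTo_contractBox (t + k) hc)) (pow_nonneg hδ0 k)

lemma continuousOn_piVal (hδ0 : 0 ≤ δ) (hδ1 : δ < 1) (hπ : ContinuousOn π (Icc 0 1)) (t : ℕ) :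
    ContinuousOn (fun c : (ℕ → ℝ) × (ℕ → ℝ) => PiVal δ π c.1 c.2 t) (contractBox M) :=
  continuousOn_tsum_discounted (h := fun y => π y.1 - y.2) hδ0 hδ1
    ((hπ.comp continuousOn_fst fun _ hy => hy.1).sub continuousOn_snd) t

lemma continuousOn_wVal (hδ0 : 0 ≤ δ) (hδ1 : δ < 1) (hw : ContinuousOn w (Icc 0 1)) (t : ℕ) :
    ContinuousOn (fun c : (ℕ → ℝ) × (ℕ → ℝ) => WVal δ w c.1 c.2 t) (contractBox M) :=
  continuousOn_tsum_discounted (h := fun y => w y.1 + y.2) hδ0 hδ1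
    ((hw.comp continuousOn_fst fun _ hy => hy.1).add continuousOn_snd) t

lemma exists_setOf_implementable_subset_contractBox (hδ0 : 0 < δ) (hδ1 : δ < 1)
    (hπ : ContinuousOn π (Icc 0 1)) :
    ∃ M, {c : (ℕ → ℝ) × (ℕ → ℝ) | Implementable δ π w c.1 c.2} ⊆ contractBox M := by
  obtain ⟨C, hC⟩ := isCompact_Icc.exists_bound_of_continuousOn hπ
  exact ⟨2 * δ * C / (1 - δ), fun c hc => ⟨fun t _ => hc.1.1 t,
    fun t _ => ⟨hc.2.2.1 t, hc.payment_le hδ0 hδ1 hC t⟩⟩⟩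


lemma isCompact_setOf_implementable (hδ0 : 0 < δ) (hδ1 : δ < 1) (hπ : ContinuousOn π (Icc 0 1))
    (hw : ContinuousOn w (Icc 0 1)) :
    IsCompact {c : (ℕ → ℝ) × (ℕ → ℝ) | Implementable δ π w c.1 c.2} := by
  obtain ⟨M, hM⟩ := exists_setOf_implementable_subset_contractBox (w := w) hδ0 hδ1 hπ
  have hbox := (isCompact_contractBox M).isClosed
  have hcoord (t : ℕ) :
      ContinuousOn (fun c : (ℕ → ℝ) × (ℕ → ℝ) => c.1 t) (contractBox M) := by fun_prop
  have hPIC (t : ℕ) : IsClosed {c ∈ contractBox M | π (c.1 t) / (1 - δ) ≤ PiVal δ π c.1 c.2 t} :=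
    hbox.isClosed_le ((hπ.comp (hcoord t) fun _ hc => (mapsTo_contractBox t hc).1).div_const _)
      (continuousOn_piVal hδ0.le hδ1 hπ t)
  have hEIC (t : ℕ) :
      IsClosed {c ∈ contractBox M | w (c.1 t) / (1 - δ) ≤ WVal δ w c.1 c.2 (t + 1)} :=
    hbox.isClosed_le ((hw.comp (hcoord t) fun _ hc => (mapsTo_contractBox t hc).1).div_const _)
      (continuousOn_wVal hδ0.le hδ1 hw (t + 1))
  have hset : {c : (ℕ → ℝ) × (ℕ → ℝ) | Implementable δ π w c.1 c.2} =
      contractBox M ∩ ({c | c.1 0 = 0} ∩ {c | Monotone c.1} ∩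
        (⋂ t, {c ∈ contractBox M | π (c.1 t) / (1 - δ) ≤ PiVal δ π c.1 c.2 t}) ∩
        ⋂ t, {c ∈ contractBox M | w (c.1 t) / (1 - δ) ≤ WVal δ w c.1 c.2 (t + 1)}) := by
    ext c
    simp only [mem_inter_iff, mem_ofPred_eq, mem_iInter]
    constructor
    · intro hc
      have hcM := hM hc
      exact ⟨hcM, ⟨⟨hc.1.2.1, hc.2.1⟩, fun t => ⟨hcM, hc.2.2.2.1 t⟩⟩, fun t => ⟨hcM, hc.2.2.2.2 t⟩⟩
    · rintro ⟨hcM, ⟨⟨h0, hmono⟩, hP⟩, hE⟩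
      exact ⟨isContract_of_mem_contractBox hδ0.le hδ1 hcM h0, hmono,
        fun t => (mapsTo_contractBox t hcM).2.1, fun t => (hP t).2, fun t => (hE t).2⟩
  rw [hset]
  exact (isCompact_contractBox M).inter_right
    ((((isClosed_eq (by fun_prop) continuous_const).inter
      (isClosed_monotone.preimage continuous_fst)).inter (isClosed_iInter hPIC)).inter
      (isClosed_iInter hEIC))

end Compactness

theorem exists_optimal_contract_general
    (δ : ℝ) (hδ : δ ∈ Set.Ioo (0 : ℝ) 1) (π w : ℝ → ℝ)
    (hπc : ContinuousOn π (Set.Icc 0 1)) (hwc : ContinuousOn w (Set.Icc 0 1)) :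
    ∃ s p : ℕ → ℝ, Optimal δ π w s p := by
  obtain ⟨hδ0, hδ1⟩ := hδ
  obtain ⟨M, hM⟩ := exists_setOf_implementable_subset_contractBox (w := w) hδ0 hδ1 hπc
  obtain ⟨c, hc, hmax⟩ := (isCompact_setOf_implementable hδ0 hδ1 hπc hwc).exists_isMaxOn
    ⟨(0, 0), implementable_zero hδ0.le hδ1⟩ ((continuousOn_piVal hδ0.le hδ1 hπc 0).mono hM)
  exact ⟨c.1, c.2, hc, fun s p hsp => hmax (a := (s, p)) hsp⟩

/-- An optimal contract exists. -/
theorem exists_optimal_contract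
    (δ : ℝ) (hδ : δ ∈ Set.Ioo (0 : ℝ) 1) (π w : ℝ → ℝ)
    (hπc : ContinuousOn π (Set.Icc 0 1)) (hwc : ContinuousOn w (Set.Icc 0 1))
    (hπm : StrictMonoOn π (Set.Icc 0 1)) (hwa : StrictAntiOn w (Set.Icc 0 1))
    (hGm : StrictMonoOn (fun x => π x + w x) (Set.Icc 0 1)) :
    ∃ s p : ℕ → ℝ, Optimal δ π w s p :=
  exists_optimal_contract_general δ hδ π w hπc hwc
end

section
/- Nonstop training: if (s,p) is an implementable contract and s_{t₀} < s_{t₀+1} for some period t₀, then for every T there exists t ≥ T with s_t < s_{t+1}; in particular there is no T such that s_t = s_T for all t ≥ T. -/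
open Set Filter

/-- Nonstop training. -/
theorem nonstop_training
    (δ : ℝ) (hδ : δ ∈ Set.Ioo (0 : ℝ) 1) (π w : ℝ → ℝ)
    (hπc : ContinuousOn π (Set.Icc 0 1)) (hwc : ContinuousOn w (Set.Icc 0 1))
    (hπm : StrictMonoOn π (Set.Icc 0 1)) (hwa : StrictAntiOn w (Set.Icc 0 1))
    (hGm : StrictMonoOn (fun x => π x + w x) (Set.Icc 0 1))
    (s p : ℕ → ℝ) (himp : Implementable δ π w s p)
    (t₀ : ℕ) (ht₀ : s t₀ < s (t₀ + 1)) :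
    (∀ T : ℕ, ∃ t, T ≤ t ∧ s t < s (t + 1)) ∧
    ¬ ∃ T : ℕ, ∀ t, T ≤ t → s t = s T := by
  classical
  obtain ⟨⟨hs01, hs0, hsum⟩, hmono, hp, hPIC, hEIC⟩ := himp
  have hδ0 := hδ.1
  have hδ1 := hδ.2
  have h1δ : (0:ℝ) < 1 - δ := by linarith
  have hgeom : Summable (fun k : ℕ => δ ^ k) :=
    summable_geometric_of_lt_one hδ0.le hδ1
  have key : ∀ T : ℕ, ∃ t, T ≤ t ∧ s t < s (t + 1) := by
    intro T
    by_contra hcon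
    push_neg at hcon
    by_cases hT : T ≤ t₀
    · exact absurd ht₀ (not_lt.2 (hcon t₀ hT))
    push_neg at hT
    set Q : ℕ → Prop := fun t => s t < s (t + 1) with hQ
    set t₁ : ℕ := Nat.findGreatest Q T + 1 with ht₁
    have hQstar : Q (Nat.findGreatest Q T) :=
      Nat.findGreatest_spec (le_of_lt hT) ht₀
    have hnoQ : ∀ t, t₁ ≤ t → ¬ Q t := by
      intro t ht
      by_cases htT : t ≤ T
      · exact Nat.findGreatest_is_greatest (Nat.lt_of_succ_le ht) htT
      · push_neg at htT
        exact fun hq => absurd hq (not_lt.2 (hcon t htT.le))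
    have hconst : ∀ k, s (t₁ + k) = s t₁ := by
      intro k
      induction k with
      | zero => rfl
      | succ n ih =>
        have h1 : s (t₁ + n + 1) ≤ s (t₁ + n) :=
          not_lt.1 (hnoQ (t₁ + n) (Nat.le_add_right _ _))
        have h2 : s (t₁ + n) ≤ s (t₁ + n + 1) := hmono (Nat.le_succ (t₁ + n))
        have h3 : s (t₁ + n + 1) = s (t₁ + n) := le_antisymm h1 h2
        calc s (t₁ + (n + 1)) = s (t₁ + n + 1) := by rw [Nat.add_succ]
          _ = s (t₁ + n) := h3
          _ = s t₁ := ih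
    have hδne : δ ≠ 0 := ne_of_gt hδ0
    have hpshift : Summable (fun k => δ ^ k * p (t₁ + k)) := by
      have h1 : Summable (fun k => δ ^ (k + t₁) * p (k + t₁)) :=
        (summable_nat_add_iff t₁).2 hsum
      refine (h1.mul_left ((δ ^ t₁)⁻¹)).congr fun k => ?_
      rw [add_comm k t₁, pow_add]
      field_simp
      ring
    have hgeomπ : Summable (fun k : ℕ => δ ^ k * π (s t₁)) := hgeom.mul_right _
    have hgeomw : Summable (fun k : ℕ => δ ^ k * w (s t₁)) := hgeom.mul_right _
    have hPi : PiVal δ π s p t₁ = π (s t₁) / (1 - δ) - ∑' k, δ ^ k * p (t₁ + k) := by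
      unfold PiVal
      have hc : ∀ k : ℕ, δ ^ k * (π (s (t₁ + k)) - p (t₁ + k))
          = δ ^ k * π (s t₁) - δ ^ k * p (t₁ + k) := by
        intro k; rw [hconst k]; ring
      rw [tsum_congr hc, Summable.tsum_sub hgeomπ hpshift, tsum_mul_right,
        tsum_geometric_of_lt_one hδ0.le hδ1]
      ring
    have hW : WVal δ w s p t₁ = w (s t₁) / (1 - δ) + ∑' k, δ ^ k * p (t₁ + k) := by
      unfold WVal
      have hc : ∀ k : ℕ, δ ^ k * (w (s (t₁ + k)) + p (t₁ + k))
          = δ ^ k * w (s t₁) + δ ^ k * p (t₁ + k) := by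
        intro k; rw [hconst k]; ring
      rw [tsum_congr hc, Summable.tsum_add hgeomw hpshift, tsum_mul_right,
        tsum_geometric_of_lt_one hδ0.le hδ1]
      ring
    have hP0 : ∑' k, δ ^ k * p (t₁ + k) ≤ 0 := by
      have := hPIC t₁
      rw [hPi] at this
      linarith
    have hE := hEIC (Nat.findGreatest Q T)
    rw [← ht₁] at hE
    rw [hW] at hE
    have hle : w (s (Nat.findGreatest Q T)) ≤ w (s t₁) := by
      have h1 : w (s (Nat.findGreatest Q T)) / (1 - δ) ≤ w (s t₁) / (1 - δ) := by
        linarith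
      exact (div_le_div_iff_of_pos_right h1δ).1 h1
    have hlt : w (s t₁) < w (s (Nat.findGreatest Q T)) :=
      hwa (hs01 _) (hs01 _) hQstar
    linarith
  refine ⟨key, ?_⟩
  rintro ⟨T, hT⟩
  obtain ⟨t, htT, hlt⟩ := key T
  have h1 := hT t htT
  have h2 := hT (t + 1) (by omega)
  linarith
end

section
/- Binding incentive constraints: if (s,p) is an optimal contract that is not trivial (i.e., s_t > 0 for some t), then p_0 = 0, Π_t(s,p) = π(s_t)/(1−δ) for every t ≥ 1, and W_{t+1}(s,p) = w(s_t)/(1−δ) for every t ≥ 0. -/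
open Set Filter

/-!
Replacing the payments of an implementable contract by `canonPay`, the payments that make every
expert constraint bind, lowers each expert value while leaving the surplus `Π_t + W_t` unchanged;
so it preserves implementability, weakly raises every principal value, and keeps an optimal
contract optimal. Suppose that under these payments (P-IC) were slack at some `t ≥ 1`. If `s` is
constant from `t` on, nonnegative payments already force (P-IC) to bind. Otherwise slack persists
up to the first later period `n` in which `s` increases, and raising `s_n` slightly there keeps
(P-IC) at `n` by continuity of `π`, weakly raises every other principal value (since `π + w`
increases and `w` decreases), and strictly raises `Π_0`, contradicting optimality. Once (P-IC)
binds for the canonical payments, equality of the surpluses makes both constraints bind for the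
original ones, and comparing `W_0` gives `p_0 = 0`.
-/

/-- `PiVal δ π s p` and `WVal δ w s p` are definitionally the discounted sums of `π ∘ s - p`
and `w ∘ s + p`. -/
noncomputable def discountedSum (δ : ℝ) (f : ℕ → ℝ) (t : ℕ) : ℝ :=
  ∑' k : ℕ, δ ^ k * f (t + k)

section DiscountedSum

variable {δ : ℝ} {f g : ℕ → ℝ}

lemma summable_discounted_shift (hδ : δ ≠ 0) (hf : Summable fun n => δ ^ n * f n) (t : ℕ) :
    Summable fun k => δ ^ k * f (t + k) := by
  refine (((summable_nat_add_iff t).mpr hf).mul_left (δ ^ t)⁻¹).congr fun k => ?_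
  rw [add_comm t k, pow_add]
  field_simp

lemma summable_discounted_pred (hf : Summable fun n => δ ^ n * f n) :
    Summable fun n => δ ^ n * f (n - 1) := by
  refine (summable_nat_add_iff 1).mp ((hf.mul_left δ).congr fun n => ?_)
  simp only [Nat.add_sub_cancel, pow_succ]
  ring

lemma summable_discounted_of_bound (h0 : 0 ≤ δ) (h1 : δ < 1) {C : ℝ} (hC : ∀ n, ‖f n‖ ≤ C) :
    Summable fun n => δ ^ n * f n := by
  refine Summable.of_norm_bounded ((summable_geometric_of_lt_one h0 h1).mul_right C) fun n => ?_
  rw [norm_mul, norm_pow, Real.norm_of_nonneg h0]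
  exact mul_le_mul_of_nonneg_left (hC n) (by positivity)

lemma discountedSum_eq_add (hδ : δ ≠ 0) (hf : Summable fun n => δ ^ n * f n) (t : ℕ) :
    discountedSum δ f t = f t + δ * discountedSum δ f (t + 1) := by
  rw [discountedSum, (summable_discounted_shift hδ hf t).tsum_eq_zero_add, discountedSum,
    ← tsum_mul_left]
  congr 1
  · simp
  · refine tsum_congr fun k => ?_
    rw [pow_succ, show t + (k + 1) = t + 1 + k by omega]
    ring

lemma discountedSum_add (hδ : δ ≠ 0) (hf : Summable fun n => δ ^ n * f n)
    (hg : Summable fun n => δ ^ n * g n) (t : ℕ) :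
    discountedSum δ (fun n => f n + g n) t = discountedSum δ f t + discountedSum δ g t := by
  rw [discountedSum, discountedSum, discountedSum,
    ← (summable_discounted_shift hδ hf t).tsum_add (summable_discounted_shift hδ hg t)]
  exact tsum_congr fun k => mul_add _ _ _

lemma discountedSum_sub (hδ : δ ≠ 0) (hf : Summable fun n => δ ^ n * f n)
    (hg : Summable fun n => δ ^ n * g n) (t : ℕ) :
    discountedSum δ (fun n => f n - g n) t = discountedSum δ f t - discountedSum δ g t := by
  rw [discountedSum, discountedSum, discountedSum,
    ← (summable_discounted_shift hδ hf t).tsum_sub (summable_discounted_shift hδ hg t)]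
  exact tsum_congr fun k => mul_sub _ _ _

lemma discountedSum_const_mul (c : ℝ) (t : ℕ) :
    discountedSum δ (fun n => c * f n) t = c * discountedSum δ f t := by
  rw [discountedSum, discountedSum, ← tsum_mul_left]
  exact tsum_congr fun k => mul_left_comm _ _ _

lemma discountedSum_const (h0 : 0 ≤ δ) (h1 : δ < 1) (c : ℝ) (t : ℕ) :
    discountedSum δ (fun _ => c) t = c / (1 - δ) := by
  rw [discountedSum, tsum_mul_right, tsum_geometric_of_lt_one h0 h1, div_eq_mul_inv, mul_comm]

lemma div_one_sub_eq_add_mul_div (hδ : δ ≠ 1) (c : ℝ) : c / (1 - δ) = c + δ * (c / (1 - δ)) := by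
  field_simp [sub_ne_zero.mpr hδ.symm]
  ring

lemma discountedSum_pred (hδ : δ ≠ 0) (hf : Summable fun n => δ ^ n * f n) (t : ℕ) :
    discountedSum δ (fun n => f (n - 1)) t = f (t - 1) + δ * discountedSum δ f t := by
  rw [discountedSum_eq_add hδ (summable_discounted_pred hf)]
  congr 2
  exact tsum_congr fun k => by simp only [show t + 1 + k - 1 = t + k by omega]

lemma discountedSum_le_discountedSum (hδ : 0 < δ) (hf : Summable fun n => δ ^ n * f n)
    (hg : Summable fun n => δ ^ n * g n) {t : ℕ} (hfg : ∀ k, f (t + k) ≤ g (t + k)) :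
    discountedSum δ f t ≤ discountedSum δ g t :=
  Summable.tsum_le_tsum (fun k => mul_le_mul_of_nonneg_left (hfg k) (by positivity))
    (summable_discounted_shift hδ.ne' hf t) (summable_discounted_shift hδ.ne' hg t)

lemma discountedSum_lt_discountedSum (hδ : 0 < δ) (hf : Summable fun n => δ ^ n * f n)
    (hg : Summable fun n => δ ^ n * g n) (hfg : f ≤ g) {i : ℕ} (hi : f i < g i) :
    discountedSum δ f 0 < discountedSum δ g 0 := by
  refine Summable.tsum_lt_tsum (i := i) (fun k => ?_) ?_ (summable_discounted_shift hδ.ne' hf 0)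
    (summable_discounted_shift hδ.ne' hg 0)
  · exact mul_le_mul_of_nonneg_left (hfg _) (by positivity)
  · simpa using mul_lt_mul_of_pos_left hi (pow_pos hδ i)

end DiscountedSum

section Contracts

variable {δ : ℝ} {π w : ℝ → ℝ} {s s' p p' : ℕ → ℝ}

lemma summable_discounted_comp {φ : ℝ → ℝ} (hδ : δ ∈ Ioo 0 1) (hφ : ContinuousOn φ (Icc 0 1))
    (hs : ∀ n, s n ∈ Icc 0 1) : Summable fun n => δ ^ n * φ (s n) := by
  obtain ⟨C, hC⟩ := isCompact_Icc.exists_bound_of_continuousOn hφ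
  exact summable_discounted_of_bound hδ.1.le hδ.2 fun n => hC _ (hs n)

lemma PiVal_add_WVal (hδ : δ ≠ 0) (hπ : Summable fun n => δ ^ n * π (s n))
    (hw : Summable fun n => δ ^ n * w (s n)) (hp : Summable fun n => δ ^ n * p n) (t : ℕ) :
    PiVal δ π s p t + WVal δ w s p t = discountedSum δ (fun n => π (s n) + w (s n)) t := by
  show discountedSum δ (fun n => π (s n) - p n) t + discountedSum δ (fun n => w (s n) + p n) t = _
  rw [discountedSum_sub hδ hπ hp, discountedSum_add hδ hw hp, discountedSum_add hδ hπ hw]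
  ring

lemma PiVal_add_WVal_eq (hδ : δ ∈ Ioo 0 1) (hπc : ContinuousOn π (Icc 0 1))
    (hwc : ContinuousOn w (Icc 0 1)) (hs : ∀ n, s n ∈ Icc 0 1)
    (hp : Summable fun n => δ ^ n * p n) (hp' : Summable fun n => δ ^ n * p' n) (t : ℕ) :
    PiVal δ π s p t + WVal δ w s p t = PiVal δ π s p' t + WVal δ w s p' t := by
  have hπ := summable_discounted_comp hδ hπc hs
  have hw := summable_discounted_comp hδ hwc hs
  rw [PiVal_add_WVal hδ.1.ne' hπ hw hp, PiVal_add_WVal hδ.1.ne' hπ hw hp']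

/-- The payments making every (E-IC) bind; the truncated subtraction `0 - 1 = 0` makes the
payment at `0` vanish. -/
noncomputable def canonPay (δ : ℝ) (w : ℝ → ℝ) (s : ℕ → ℝ) (n : ℕ) : ℝ :=
  (w (s (n - 1)) - w (s n)) / (1 - δ)

lemma canonPay_nonneg (hδ : δ < 1) (hws : Antitone fun n => w (s n)) (n : ℕ) :
    0 ≤ canonPay δ w s n :=
  div_nonneg (sub_nonneg.mpr (hws (Nat.sub_le n 1))) (sub_nonneg.mpr hδ.le)

lemma summable_canonPay (hw : Summable fun n => δ ^ n * w (s n)) :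
    Summable fun n => δ ^ n * canonPay δ w s n :=
  (((summable_discounted_pred hw).sub hw).div_const (1 - δ)).congr fun n => by
    rw [canonPay]; ring

lemma WVal_canonPay (hδ : δ ∈ Ioo 0 1) (hw : Summable fun n => δ ^ n * w (s n)) (t : ℕ) :
    WVal δ w s (canonPay δ w s) t = w (s (t - 1)) / (1 - δ) := by
  have h1δ : 1 - δ ≠ 0 := sub_ne_zero.mpr hδ.2.ne'
  have hpt : ∀ n, w (s n) + canonPay δ w s n = (1 - δ)⁻¹ * (w (s (n - 1)) - δ * w (s n)) := by
    intro n
    rw [canonPay]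
    field_simp
    ring
  show discountedSum δ (fun n => w (s n) + canonPay δ w s n) t = _
  simp only [hpt]
  rw [discountedSum_const_mul, discountedSum_sub hδ.1.ne' (summable_discounted_pred hw)
    (hw.mul_left δ |>.congr fun n => mul_left_comm _ _ _), discountedSum_const_mul,
    discountedSum_pred hδ.1.ne' hw]
  field_simp
  ring

lemma PiVal_canonPay (hδ : δ ∈ Ioo 0 1) (hπ : Summable fun n => δ ^ n * π (s n))
    (hw : Summable fun n => δ ^ n * w (s n)) (t : ℕ) :
    PiVal δ π s (canonPay δ w s) t
      = discountedSum δ (fun n => π (s n) + w (s n)) t - w (s (t - 1)) / (1 - δ) := by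
  rw [← PiVal_add_WVal hδ.1.ne' hπ hw (summable_canonPay hw), WVal_canonPay hδ hw]
  ring

lemma le_WVal_zero (hδ : δ ∈ Ioo 0 1) (hw : Summable fun n => δ ^ n * w (s n))
    (hp : Summable fun n => δ ^ n * p n) (hE : w (s 0) / (1 - δ) ≤ WVal δ w s p 1) :
    w (s 0) / (1 - δ) + p 0 ≤ WVal δ w s p 0 := by
  have hrec : WVal δ w s p 0 = w (s 0) + p 0 + δ * WVal δ w s p 1 :=
    discountedSum_eq_add hδ.1.ne' ((hw.add hp).congr fun n => (mul_add _ _ _).symm) 0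
  linarith [mul_le_mul_of_nonneg_left hE hδ.1.le, div_one_sub_eq_add_mul_div hδ.2.ne (w (s 0))]

lemma WVal_canonPay_le (hδ : δ ∈ Ioo 0 1) (hwc : ContinuousOn w (Icc 0 1))
    (himp : Implementable δ π w s p) (t : ℕ) :
    WVal δ w s (canonPay δ w s) t ≤ WVal δ w s p t := by
  obtain ⟨⟨hs, -, hp⟩, -, hpnn, -, hE⟩ := himp
  have hw := summable_discounted_comp hδ hwc hs
  rw [WVal_canonPay hδ hw]
  cases t with
  | zero => linarith [le_WVal_zero hδ hw hp (hE 0), hpnn 0]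
  | succ t => exact hE t

lemma implementable_canonPay (hδ : δ ∈ Ioo 0 1) (hwc : ContinuousOn w (Icc 0 1))
    (hwa : AntitoneOn w (Icc 0 1)) (hs : ∀ n, s n ∈ Icc 0 1) (hs0 : s 0 = 0) (hmono : Monotone s)
    (hP : ∀ t, π (s t) / (1 - δ) ≤ PiVal δ π s (canonPay δ w s) t) :
    Implementable δ π w s (canonPay δ w s) := by
  have hw := summable_discounted_comp hδ hwc hs
  refine ⟨⟨hs, hs0, summable_canonPay hw⟩, hmono,
    canonPay_nonneg hδ.2 fun m n h => hwa (hs m) (hs n) (hmono h), hP, fun t => ?_⟩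
  rw [WVal_canonPay hδ hw, Nat.add_sub_cancel]

lemma optimal_canonPay (hδ : δ ∈ Ioo 0 1) (hπc : ContinuousOn π (Icc 0 1))
    (hwc : ContinuousOn w (Icc 0 1)) (hwa : AntitoneOn w (Icc 0 1)) (hopt : Optimal δ π w s p) :
    Optimal δ π w s (canonPay δ w s) := by
  obtain ⟨⟨hs, hs0, hp⟩, hmono, -, hPIC, -⟩ := hopt.1
  have hle : ∀ t, PiVal δ π s p t ≤ PiVal δ π s (canonPay δ w s) t := fun t => by
    linarith [WVal_canonPay_le hδ hwc hopt.1 t, PiVal_add_WVal_eq hδ hπc hwc hs hp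
      (summable_canonPay (summable_discounted_comp hδ hwc hs)) t]
  exact ⟨implementable_canonPay hδ hwc hwa hs hs0 hmono fun t => (hPIC t).trans (hle t),
    fun s' p' h => (hopt.2 s' p' h).trans (hle 0)⟩

lemma PiVal_canonPay_le_of_le (hδ : δ ∈ Ioo 0 1) (hπc : ContinuousOn π (Icc 0 1))
    (hwc : ContinuousOn w (Icc 0 1)) (hwa : AntitoneOn w (Icc 0 1))
    (hG : MonotoneOn (fun x => π x + w x) (Icc 0 1)) (hs : ∀ n, s n ∈ Icc 0 1)
    (hs' : ∀ n, s' n ∈ Icc 0 1) (hss' : s ≤ s') (t : ℕ) :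
    PiVal δ π s (canonPay δ w s) t ≤ PiVal δ π s' (canonPay δ w s') t := by
  rw [PiVal_canonPay hδ (summable_discounted_comp hδ hπc hs) (summable_discounted_comp hδ hwc hs),
    PiVal_canonPay hδ (summable_discounted_comp hδ hπc hs') (summable_discounted_comp hδ hwc hs')]
  exact sub_le_sub
    (discountedSum_le_discountedSum hδ.1 (summable_discounted_comp hδ (hπc.add hwc) hs)
      (summable_discounted_comp hδ (hπc.add hwc) hs') fun k => hG (hs _) (hs' _) (hss' _))
    (div_le_div_of_nonneg_right (hwa (hs _) (hs' _) (hss' _)) (sub_nonneg.mpr hδ.2.le))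

lemma PiVal_canonPay_zero_lt_of_lt (hδ : δ ∈ Ioo 0 1) (hπc : ContinuousOn π (Icc 0 1))
    (hwc : ContinuousOn w (Icc 0 1)) (hwa : AntitoneOn w (Icc 0 1))
    (hG : StrictMonoOn (fun x => π x + w x) (Icc 0 1)) (hs : ∀ n, s n ∈ Icc 0 1)
    (hs' : ∀ n, s' n ∈ Icc 0 1) (hss' : s ≤ s') {i : ℕ} (hi : s i < s' i) :
    PiVal δ π s (canonPay δ w s) 0 < PiVal δ π s' (canonPay δ w s') 0 := by
  rw [PiVal_canonPay hδ (summable_discounted_comp hδ hπc hs) (summable_discounted_comp hδ hwc hs),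
    PiVal_canonPay hδ (summable_discounted_comp hδ hπc hs') (summable_discounted_comp hδ hwc hs')]
  exact (sub_lt_sub_right (discountedSum_lt_discountedSum hδ.1
      (summable_discounted_comp hδ (hπc.add hwc) hs) (summable_discounted_comp hδ (hπc.add hwc) hs')
      (fun n => hG.monotoneOn (hs n) (hs' n) (hss' n)) (hG (hs i) (hs' i) hi)) _).trans_le
    (sub_le_sub_left (div_le_div_of_nonneg_right (hwa (hs _) (hs' _) (hss' _))
      (sub_nonneg.mpr hδ.2.le)) _)

lemma exists_implementable_gt_of_slack (hδ : δ ∈ Ioo 0 1) (hπc : ContinuousOn π (Icc 0 1))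
    (hwc : ContinuousOn w (Icc 0 1)) (hwa : AntitoneOn w (Icc 0 1))
    (hG : StrictMonoOn (fun x => π x + w x) (Icc 0 1))
    (himp : Implementable δ π w s (canonPay δ w s)) {n : ℕ} (hn : n ≠ 0) (hgap : s n < s (n + 1))
    (hslack : π (s n) / (1 - δ) < PiVal δ π s (canonPay δ w s) n) :
    ∃ s', Implementable δ π w s' (canonPay δ w s') ∧
      PiVal δ π s (canonPay δ w s) 0 < PiVal δ π s' (canonPay δ w s') 0 := by
  obtain ⟨⟨hs, hs0, -⟩, hmono, -, hPIC, -⟩ := himp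
  obtain ⟨x, hxP, hnx, hx1⟩ : ∃ x, π x / (1 - δ) < PiVal δ π s (canonPay δ w s) n ∧
      x ∈ Ioc (s n) (s (n + 1)) := by
    have hc : ContinuousWithinAt (fun x => π x / (1 - δ)) (Ioc (s n) (s (n + 1))) (s n) :=
      ((hπc.continuousWithinAt (hs n)).mono (Ioc_subset_Icc_self.trans
        (Icc_subset_Icc (hs n).1 (hs (n + 1)).2))).div_const _
    have := left_nhdsWithin_Ioc_neBot hgap
    exact ((Tendsto.eventually_lt_const hslack hc).and self_mem_nhdsWithin).exists
  set s' := Function.update s n x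
  have hss' : s ≤ s' := fun m => by
    simp only [s', Function.update_apply]
    split_ifs with h
    · exact h ▸ hnx.le
    · exact le_rfl
  have hs' : ∀ m, s' m ∈ Icc 0 1 := fun m => by
    simp only [s', Function.update_apply]
    split_ifs
    · exact ⟨(hs n).1.trans hnx.le, hx1.trans (hs (n + 1)).2⟩
    · exact hs m
  have hmono' : Monotone s' := monotone_nat_of_le_succ fun m => by
    have := hmono (Nat.le_succ m)
    simp only [s', Function.update_apply]
    split_ifs with h1 h2 h2 <;> subst_vars
    · omega
    · exact hx1
    · linarith
    · exact this
  refine ⟨s', implementable_canonPay hδ hwc hwa hs' ?_ hmono' fun t => ?_,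
    PiVal_canonPay_zero_lt_of_lt hδ hπc hwc hwa hG hs hs' hss' (i := n) ?_⟩
  · simpa [s', Function.update_of_ne hn.symm] using hs0
  · have hle := PiVal_canonPay_le_of_le hδ hπc hwc hwa hG.monotoneOn hs hs' hss' t
    by_cases ht : t = n
    · subst ht
      simpa [s'] using hxP.le.trans hle
    · simpa [s', Function.update_of_ne ht] using (hPIC t).trans hle
  · simpa [s'] using hnx

lemma PiVal_le_of_succ_eq (hδ : δ ∈ Ioo 0 1) (hf : Summable fun n => δ ^ n * (π (s n) - p n))
    {n : ℕ} (hpn : 0 ≤ p n) (hflat : s (n + 1) = s n)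
    (hnext : PiVal δ π s p (n + 1) ≤ π (s (n + 1)) / (1 - δ)) :
    PiVal δ π s p n ≤ π (s n) / (1 - δ) := by
  have hrec : PiVal δ π s p n = π (s n) - p n + δ * PiVal δ π s p (n + 1) :=
    discountedSum_eq_add hδ.1.ne' hf n
  rw [hflat] at hnext
  linarith [mul_le_mul_of_nonneg_left hnext hδ.1.le, div_one_sub_eq_add_mul_div hδ.2.ne (π (s n))]

lemma PiVal_le_of_const_from (hδ : δ ∈ Ioo 0 1) (hf : Summable fun n => δ ^ n * (π (s n) - p n))
    (hp : ∀ m, 0 ≤ p m) {n : ℕ} (hconst : ∀ k, s (n + k) = s n) :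
    PiVal δ π s p n ≤ π (s n) / (1 - δ) := by
  rw [← discountedSum_const hδ.1.le hδ.2 (π (s n)) n]
  exact discountedSum_le_discountedSum hδ.1 hf
    ((summable_geometric_of_lt_one hδ.1.le hδ.2).mul_right _) fun k => by
      rw [hconst k]
      linarith [hp (n + k)]

lemma PiVal_canonPay_le_of_lt_succ (hδ : δ ∈ Ioo 0 1) (hπc : ContinuousOn π (Icc 0 1))
    (hwc : ContinuousOn w (Icc 0 1)) (hwa : AntitoneOn w (Icc 0 1))
    (hG : StrictMonoOn (fun x => π x + w x) (Icc 0 1))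
    (hopt : Optimal δ π w s (canonPay δ w s)) {n : ℕ} (hn : n ≠ 0) (hgap : s n < s (n + 1)) :
    PiVal δ π s (canonPay δ w s) n ≤ π (s n) / (1 - δ) := by
  by_contra! hslack
  obtain ⟨s', himp', hlt⟩ :=
    exists_implementable_gt_of_slack hδ hπc hwc hwa hG hopt.1 hn hgap hslack
  exact (hopt.2 _ _ himp').not_gt hlt

lemma PiVal_canonPay_le_of_optimal (hδ : δ ∈ Ioo 0 1) (hπc : ContinuousOn π (Icc 0 1))
    (hwc : ContinuousOn w (Icc 0 1)) (hwa : AntitoneOn w (Icc 0 1))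
    (hG : StrictMonoOn (fun x => π x + w x) (Icc 0 1))
    (hopt : Optimal δ π w s (canonPay δ w s)) {n : ℕ} (hn : n ≠ 0) :
    PiVal δ π s (canonPay δ w s) n ≤ π (s n) / (1 - δ) := by
  obtain ⟨⟨hs, -, hq⟩, hmono, hqnn, -⟩ := hopt.1
  have hf : Summable fun m => δ ^ m * (π (s m) - canonPay δ w s m) :=
    ((summable_discounted_comp hδ hπc hs).sub hq).congr fun m => (mul_sub _ _ _).symm
  by_cases hgap : ∃ d, s (n + d) < s (n + d + 1)
  · obtain ⟨d, hd⟩ := hgap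
    induction d generalizing n with
    | zero => exact PiVal_canonPay_le_of_lt_succ hδ hπc hwc hwa hG hopt hn hd
    | succ d ih =>
      rcases (hmono (Nat.le_succ n)).lt_or_eq with hlt | heq
      · exact PiVal_canonPay_le_of_lt_succ hδ hπc hwc hwa hG hopt hn hlt
      · exact PiVal_le_of_succ_eq hδ hf (hqnn n) heq.symm
          (ih n.succ_ne_zero (by rwa [Nat.add_right_comm n 1 d]))
  · simp only [not_exists, not_lt] at hgap
    refine PiVal_le_of_const_from hδ hf hqnn fun k => ?_
    induction k with
    | zero => rfl
    | succ k ih => exact (le_antisymm (hgap k) (hmono (Nat.le_succ _))).trans ih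

end Contracts

theorem binding_constraints_general
    (δ : ℝ) (hδ : δ ∈ Set.Ioo (0 : ℝ) 1) (π w : ℝ → ℝ)
    (hπc : ContinuousOn π (Set.Icc 0 1)) (hwc : ContinuousOn w (Set.Icc 0 1))
    (hwa : StrictAntiOn w (Set.Icc 0 1))
    (hGm : StrictMonoOn (fun x => π x + w x) (Set.Icc 0 1))
    (s p : ℕ → ℝ) (hopt : Optimal δ π w s p) :
    p 0 = 0 ∧
    (∀ t : ℕ, 1 ≤ t → PiVal δ π s p t = π (s t) / (1 - δ)) ∧
    (∀ t : ℕ, WVal δ w s p (t + 1) = w (s t) / (1 - δ)) := by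
  have hoptq := optimal_canonPay hδ hπc hwc hwa.antitoneOn hopt
  obtain ⟨⟨hs, -, hp⟩, -, hpnn, hPIC, hEIC⟩ := hopt.1
  have hw := summable_discounted_comp hδ hwc hs
  have hsurplus := PiVal_add_WVal_eq hδ hπc hwc hs hp (summable_canonPay hw)
  have hbind : ∀ t, PiVal δ π s (canonPay δ w s) (t + 1) ≤ π (s (t + 1)) / (1 - δ) :=
    fun t => PiVal_canonPay_le_of_optimal hδ hπc hwc hwa.antitoneOn hGm hoptq t.succ_ne_zero
  have hWq (t : ℕ) : WVal δ w s (canonPay δ w s) (t + 1) = w (s t) / (1 - δ) := by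
    rw [WVal_canonPay hδ hw, Nat.add_sub_cancel]
  have hW (t : ℕ) : WVal δ w s p (t + 1) = w (s t) / (1 - δ) :=
    le_antisymm (by linarith [hPIC (t + 1), hbind t, hsurplus (t + 1), hWq t]) (hEIC t)
  refine ⟨?_, fun t ht => ?_, hW⟩
  · have hW0 : WVal δ w s p 0 ≤ w (s 0) / (1 - δ) := by
      linarith [hopt.2 _ _ hoptq.1, hsurplus 0, WVal_canonPay hδ hw 0]
    linarith [le_WVal_zero hδ hw hp (hEIC 0), hpnn 0]
  · obtain ⟨t, rfl⟩ := Nat.exists_eq_add_of_le' ht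
    linarith [hPIC (t + 1), hbind t, hsurplus (t + 1), hWq t, hW t]

/-- Binding incentive constraints in any nontrivial optimal contract. -/
theorem binding_constraints
    (δ : ℝ) (hδ : δ ∈ Set.Ioo (0 : ℝ) 1) (π w : ℝ → ℝ)
    (hπc : ContinuousOn π (Set.Icc 0 1)) (hwc : ContinuousOn w (Set.Icc 0 1))
    (hπm : StrictMonoOn π (Set.Icc 0 1)) (hwa : StrictAntiOn w (Set.Icc 0 1))
    (hGm : StrictMonoOn (fun x => π x + w x) (Set.Icc 0 1))
    (s p : ℕ → ℝ) (hopt : Optimal δ π w s p) (hnontrivial : ∃ t, 0 < s t) :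
    p 0 = 0 ∧
    (∀ t : ℕ, 1 ≤ t → PiVal δ π s p t = π (s t) / (1 - δ)) ∧
    (∀ t : ℕ, WVal δ w s p (t + 1) = w (s t) / (1 - δ)) :=
  binding_constraints_general δ hδ π w hπc hwc hwa hGm s p hopt
end

section
/- Payment frontloading: if (s,p) is an optimal contract, then p_0 = 0 and p_t = (w(s_{t−1}) − w(s_t))/(1−δ) for every t ≥ 1; that is, p = p*(s). -/
/-!
(E-IC) says that from every date `t ≥ 1` on the payments are worth at least those of `p*(s)`,
whose tail telescopes to the expert's outside option `w(s_{t-1})/(1-δ)` minus the value of his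
flow payoff; with `p₀ ≥ 0` this holds at `t = 0` too. So `(s, p*(s))` is implementable whenever
`(s, p)` is, and at least as profitable, which forces equal tails at `t = 0` for an optimal
contract. If at some `t ≥ 1` the tail of `p` were strictly larger, (P-IC) of `(s, p*(s))` would
be slack at `t`; raising the action slightly from `t` on then keeps `(s', p*(s'))` implementable
and strictly raises the surplus `π + w`, hence the profit. So all tails of `p` and `p*(s)`
agree, and hence so do the payments.
-/

open Set Filter

/-- The frontloaded payment scheme `p*(s)`: `p*_0 = 0`, `p*_t = (w(s_{t−1}) − w(s_t))/(1−δ)` for `t ≥ 1`. -/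
noncomputable def payStar (δ : ℝ) (w : ℝ → ℝ) (s : ℕ → ℝ) (t : ℕ) : ℝ :=
  if t = 0 then 0 else (w (s (t - 1)) - w (s t)) / (1 - δ)

theorem summable_pow_mul_of_continuousOn {δ : ℝ} (hδ0 : 0 ≤ δ) (hδ1 : δ < 1) {K : Set ℝ}
    (hK : IsCompact K) {f : ℝ → ℝ} (hf : ContinuousOn f K) {u : ℕ → ℝ} (hu : ∀ n, u n ∈ K) :
    Summable fun n => δ ^ n * f (u n) := by
  obtain ⟨C, hC⟩ := hK.exists_bound_of_continuousOn hf
  refine .of_norm_bounded ((summable_geometric_of_lt_one hδ0 hδ1).mul_right C) fun n => ?_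
  rw [norm_mul, norm_pow, Real.norm_of_nonneg hδ0]
  exact mul_le_mul_of_nonneg_left (hC _ (hu n)) (pow_nonneg hδ0 n)

theorem ContinuousOn.exists_mem_Ioc_lt_add {f : ℝ → ℝ} {a b x ε : ℝ}
    (hf : ContinuousOn f (Icc a b)) (hx : x ∈ Ico a b) (hε : 0 < ε) :
    ∃ c ∈ Ioc x b, f c < f x + ε := by
  have hIcc : Icc a b ∈ nhdsWithin x (Ioi x) :=
    mem_of_superset (Ioc_mem_nhdsGT hx.2) (Ioc_subset_Icc_self.trans (Icc_subset_Icc_left hx.1))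
  have hcont := (hf x (Ico_subset_Icc_self hx)).mono_of_mem_nhdsWithin hIcc
  exact (Filter.Eventually.and (Ioc_mem_nhdsGT hx.2)
    (hcont.eventually (gt_mem_nhds (lt_add_of_pos_right _ hε)))).exists

noncomputable def discountedTail (δ : ℝ) (q : ℕ → ℝ) (t : ℕ) : ℝ :=
  ∑' k : ℕ, δ ^ k * q (t + k)

section discountedTail

variable {δ : ℝ} {q r : ℕ → ℝ} {t : ℕ}

theorem summable_pow_mul_add (hδ : δ ≠ 0) (hq : Summable fun n => δ ^ n * q n) (t : ℕ) :
    Summable fun k => δ ^ k * q (t + k) := by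
  refine (((summable_nat_add_iff t).2 hq).mul_left (δ ^ t)⁻¹).congr fun k => ?_
  rw [add_comm k t, pow_add, ← mul_assoc, ← mul_assoc, inv_mul_cancel₀ (pow_ne_zero t hδ), one_mul]

theorem discountedTail_eq_add_mul (hq : Summable fun k => δ ^ k * q (t + k)) :
    discountedTail δ q t = q t + δ * discountedTail δ q (t + 1) := by
  rw [discountedTail, hq.tsum_eq_zero_add, discountedTail, ← tsum_mul_left]
  simp only [pow_zero, one_mul, add_zero, pow_succ]
  congr 1
  exact tsum_congr fun k => by rw [show t + (k + 1) = t + 1 + k by omega]; ring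

theorem discountedTail_const (hδ0 : 0 ≤ δ) (hδ1 : δ < 1) (c : ℝ) (t : ℕ) :
    discountedTail δ (fun _ => c) t = c / (1 - δ) := by
  rw [discountedTail, tsum_mul_right, tsum_geometric_of_lt_one hδ0 hδ1, inv_mul_eq_div]

theorem discountedTail_add (hq : Summable fun k => δ ^ k * q (t + k))
    (hr : Summable fun k => δ ^ k * r (t + k)) :
    discountedTail δ (fun n => q n + r n) t = discountedTail δ q t + discountedTail δ r t := by
  simp only [discountedTail, mul_add, hq.tsum_add hr]

theorem discountedTail_sub (hq : Summable fun k => δ ^ k * q (t + k))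
    (hr : Summable fun k => δ ^ k * r (t + k)) :
    discountedTail δ (fun n => q n - r n) t = discountedTail δ q t - discountedTail δ r t := by
  simp only [discountedTail, mul_sub, hq.tsum_sub hr]

theorem discountedTail_div_const (q : ℕ → ℝ) (c : ℝ) (t : ℕ) :
    discountedTail δ (fun n => q n / c) t = discountedTail δ q t / c := by
  simp only [discountedTail, ← mul_div_assoc, tsum_div_const]

theorem discountedTail_comp_pred (hq : Summable fun k => δ ^ k * q (t + k - 1)) :
    discountedTail δ (fun n => q (n - 1)) t = q (t - 1) + δ * discountedTail δ q t := by
  rw [discountedTail_eq_add_mul (q := fun n => q (n - 1)) hq]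
  congr 2
  exact tsum_congr fun k => by simp only [show t + 1 + k - 1 = t + k by omega]

theorem discountedTail_le_discountedTail (hδ : 0 ≤ δ) (hq : Summable fun k => δ ^ k * q (t + k))
    (hr : Summable fun k => δ ^ k * r (t + k)) (hqr : ∀ n, t ≤ n → q n ≤ r n) :
    discountedTail δ q t ≤ discountedTail δ r t :=
  hq.tsum_le_tsum (fun k => mul_le_mul_of_nonneg_left (hqr _ (Nat.le_add_right t k))
    (pow_nonneg hδ k)) hr

theorem discountedTail_lt_discountedTail (hδ : 0 < δ) (hq : Summable fun k => δ ^ k * q (t + k))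
    (hr : Summable fun k => δ ^ k * r (t + k)) (hqr : ∀ n, t ≤ n → q n ≤ r n) {m : ℕ}
    (htm : t ≤ m) (hm : q m < r m) :
    discountedTail δ q t < discountedTail δ r t := by
  obtain ⟨i, rfl⟩ := Nat.exists_eq_add_of_le htm
  exact hq.tsum_lt_tsum (fun k => mul_le_mul_of_nonneg_left (hqr _ (Nat.le_add_right t k))
    (pow_nonneg hδ.le k)) (mul_lt_mul_of_pos_left hm (pow_pos hδ i)) hr

theorem eq_of_discountedTail_eq (hq : ∀ t, Summable fun k => δ ^ k * q (t + k))
    (hr : ∀ t, Summable fun k => δ ^ k * r (t + k))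
    (h : ∀ t, discountedTail δ q t = discountedTail δ r t) : q = r := by
  funext t
  have hq' := discountedTail_eq_add_mul (hq t)
  have hr' := discountedTail_eq_add_mul (hr t)
  rw [h, h] at hq'
  linarith

end discountedTail

section Contracts

variable {δ : ℝ} {π w : ℝ → ℝ} {s p : ℕ → ℝ}

theorem summable_pow_mul_comp (hδ : δ ∈ Ioo 0 1) {f : ℝ → ℝ} (hf : ContinuousOn f (Icc 0 1))
    {u : ℕ → ℝ} (hu : ∀ n, u n ∈ Icc 0 1) : Summable fun n => δ ^ n * f (u n) :=
  summable_pow_mul_of_continuousOn hδ.1.le hδ.2 isCompact_Icc hf hu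

theorem PiVal_eq_sub {t : ℕ} (hπ : Summable fun k => δ ^ k * π (s (t + k)))
    (hp : Summable fun k => δ ^ k * p (t + k)) :
    PiVal δ π s p t = discountedTail δ (fun n => π (s n)) t - discountedTail δ p t :=
  discountedTail_sub (q := fun n => π (s n)) hπ hp

theorem WVal_eq_add {t : ℕ} (hw : Summable fun k => δ ^ k * w (s (t + k)))
    (hp : Summable fun k => δ ^ k * p (t + k)) :
    WVal δ w s p t = discountedTail δ (fun n => w (s n)) t + discountedTail δ p t :=
  discountedTail_add (q := fun n => w (s n)) hw hp

/-- At `t = 0` the truncated subtraction `0 - 1 = 0` makes the right-hand side vanish too. -/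
theorem payStar_eq (δ : ℝ) (w : ℝ → ℝ) (s : ℕ → ℝ) (t : ℕ) :
    payStar δ w s t = (w (s (t - 1)) - w (s t)) / (1 - δ) := by
  unfold payStar
  split_ifs with ht <;> simp [ht]

theorem summable_payStar (hδ : δ ∈ Ioo 0 1) (hwc : ContinuousOn w (Icc 0 1))
    (hs : ∀ n, s n ∈ Icc 0 1) (t : ℕ) :
    Summable fun k => δ ^ k * payStar δ w s (t + k) := by
  refine (((summable_pow_mul_comp hδ hwc fun k => hs (t + k - 1)).sub
    (summable_pow_mul_comp hδ hwc fun k => hs (t + k))).div_const (1 - δ)).congr fun k => ?_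
  rw [payStar_eq]
  ring

theorem discountedTail_payStar (hδ : δ ∈ Ioo 0 1) (hwc : ContinuousOn w (Icc 0 1))
    (hs : ∀ n, s n ∈ Icc 0 1) (t : ℕ) :
    discountedTail δ (payStar δ w s) t
      = w (s (t - 1)) / (1 - δ) - discountedTail δ (fun n => w (s n)) t := by
  have hw := summable_pow_mul_comp hδ hwc fun k => hs (t + k)
  have hw_pred := summable_pow_mul_comp hδ hwc fun k => hs (t + k - 1)
  rw [show payStar δ w s = fun n => (w (s (n - 1)) - w (s n)) / (1 - δ) from
      funext (payStar_eq δ w s), discountedTail_div_const,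
    discountedTail_sub (q := fun n => w (s (n - 1))) (r := fun n => w (s n)) hw_pred hw,
    discountedTail_comp_pred (q := fun n => w (s n)) hw_pred]
  have : 1 - δ ≠ 0 := (sub_pos.2 hδ.2).ne'
  field_simp
  ring

theorem PiVal_payStar (hδ : δ ∈ Ioo 0 1) (hπc : ContinuousOn π (Icc 0 1))
    (hwc : ContinuousOn w (Icc 0 1)) (hs : ∀ n, s n ∈ Icc 0 1) (t : ℕ) :
    PiVal δ π s (payStar δ w s) t
      = discountedTail δ (fun n => π (s n) + w (s n)) t - w (s (t - 1)) / (1 - δ) := by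
  rw [PiVal_eq_sub (summable_pow_mul_comp hδ hπc fun k => hs (t + k))
      (summable_payStar hδ hwc hs t), discountedTail_payStar hδ hwc hs t,
    discountedTail_add (q := fun n => π (s n)) (r := fun n => w (s n))
      (summable_pow_mul_comp hδ hπc fun k => hs (t + k))
      (summable_pow_mul_comp hδ hwc fun k => hs (t + k))]
  ring

/-- (P-IC) for the frontloaded contract `(s, p*(s))`, written in terms of the surplus `π + w`. -/
def FrontloadedIC (δ : ℝ) (π w : ℝ → ℝ) (s : ℕ → ℝ) : Prop :=
  ∀ t, (π (s t) + w (s (t - 1))) / (1 - δ) ≤ discountedTail δ (fun n => π (s n) + w (s n)) t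

namespace Implementable

theorem summable_payment (h : Implementable δ π w s p) (hδ : δ ≠ 0) (t : ℕ) :
    Summable fun k => δ ^ k * p (t + k) :=
  summable_pow_mul_add hδ h.1.2.2 t

theorem discountedTail_payStar_le (h : Implementable δ π w s p) (hδ : δ ∈ Ioo 0 1)
    (hwc : ContinuousOn w (Icc 0 1)) (t : ℕ) :
    discountedTail δ (payStar δ w s) t ≤ discountedTail δ p t := by
  have hs := h.1.1
  have hsucc (u : ℕ) : discountedTail δ (payStar δ w s) (u + 1) ≤ discountedTail δ p (u + 1) := by
    have hE := h.2.2.2.2 u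
    rw [WVal_eq_add (summable_pow_mul_comp hδ hwc fun k => hs (u + 1 + k))
      (h.summable_payment hδ.1.ne' (u + 1))] at hE
    rw [discountedTail_payStar hδ hwc hs, Nat.add_sub_cancel]
    linarith
  cases t with
  | succ u => exact hsucc u
  | zero =>
    rw [discountedTail_eq_add_mul (summable_payStar hδ hwc hs 0),
      discountedTail_eq_add_mul (h.summable_payment hδ.1.ne' 0), payStar_eq, Nat.zero_sub,
      sub_self, zero_div]
    exact add_le_add (h.2.2.1 0) (mul_le_mul_of_nonneg_left (hsucc 0) hδ.1.le)

theorem PiVal_le_PiVal_payStar (h : Implementable δ π w s p) (hδ : δ ∈ Ioo 0 1)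
    (hπc : ContinuousOn π (Icc 0 1)) (hwc : ContinuousOn w (Icc 0 1)) (t : ℕ) :
    PiVal δ π s p t ≤ PiVal δ π s (payStar δ w s) t := by
  have hπ := summable_pow_mul_comp hδ hπc fun k => h.1.1 (t + k)
  rw [PiVal_eq_sub hπ (h.summable_payment hδ.1.ne' t),
    PiVal_eq_sub hπ (summable_payStar hδ hwc h.1.1 t)]
  linarith [h.discountedTail_payStar_le hδ hwc t]

theorem frontloadedIC (h : Implementable δ π w s p) (hδ : δ ∈ Ioo 0 1)
    (hπc : ContinuousOn π (Icc 0 1)) (hwc : ContinuousOn w (Icc 0 1)) :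
    FrontloadedIC δ π w s := by
  intro t
  have hP := (h.2.2.2.1 t).trans (h.PiVal_le_PiVal_payStar hδ hπc hwc t)
  rw [PiVal_payStar hδ hπc hwc h.1.1] at hP
  rw [add_div]
  linarith

end Implementable

theorem implementable_payStar (hδ : δ ∈ Ioo 0 1) (hπc : ContinuousOn π (Icc 0 1))
    (hwc : ContinuousOn w (Icc 0 1)) (hwa : AntitoneOn w (Icc 0 1))
    (hs : ∀ n, s n ∈ Icc 0 1) (hs0 : s 0 = 0) (hmono : Monotone s)
    (hIC : FrontloadedIC δ π w s) : Implementable δ π w s (payStar δ w s) := by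
  have hδ1 : 0 < 1 - δ := sub_pos.2 hδ.2
  refine ⟨⟨hs, hs0, by simpa using summable_payStar hδ hwc hs 0⟩, hmono, fun t => ?_,
    fun t => ?_, fun t => ?_⟩
  · rw [payStar_eq]
    exact div_nonneg (sub_nonneg.2 (hwa (hs _) (hs _) (hmono (Nat.sub_le t 1))))
      hδ1.le
  · rw [PiVal_payStar hδ hπc hwc hs]
    linarith [hIC t, add_div (π (s t)) (w (s (t - 1))) (1 - δ)]
  · rw [WVal_eq_add (summable_pow_mul_comp hδ hwc fun k => hs (t + 1 + k))
      (summable_payStar hδ hwc hs (t + 1)), discountedTail_payStar hδ hwc hs,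
      Nat.add_sub_cancel]
    linarith

theorem discountedTail_comp_le_of_monotoneOn (hδ : δ ∈ Ioo 0 1) {f : ℝ → ℝ}
    (hfc : ContinuousOn f (Icc 0 1)) (hfm : MonotoneOn f (Icc 0 1)) {u v : ℕ → ℝ}
    (hu : ∀ n, u n ∈ Icc 0 1) (hv : ∀ n, v n ∈ Icc 0 1) {t : ℕ} (huv : ∀ n, t ≤ n → u n ≤ v n) :
    discountedTail δ (fun n => f (u n)) t ≤ discountedTail δ (fun n => f (v n)) t :=
  discountedTail_le_discountedTail hδ.1.le (summable_pow_mul_comp hδ hfc fun k => hu (t + k))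
    (summable_pow_mul_comp hδ hfc fun k => hv (t + k))
    fun n hn => hfm (hu n) (hv n) (huv n hn)

/-- If `s t = 1`, the path stays at `1` from `t` on and the surplus tail is `(π 1 + w 1)/(1-δ)`. -/
theorem lt_one_of_lt_discountedTail (hδ : δ ∈ Ioo 0 1) (hwa : AntitoneOn w (Icc 0 1))
    (hs : ∀ n, s n ∈ Icc 0 1) (hmono : Monotone s) {t : ℕ}
    (hslack : (π (s t) + w (s (t - 1))) / (1 - δ)
      < discountedTail δ (fun n => π (s n) + w (s n)) t) : s t < 1 := by
  refine (hs t).2.lt_of_ne fun h1 => hslack.not_ge ?_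
  have hconst : discountedTail δ (fun n => π (s n) + w (s n)) t
      = discountedTail δ (fun _ => π 1 + w 1) t :=
    tsum_congr fun k => by dsimp only; rw [le_antisymm (hs _).2 (h1 ▸ hmono (Nat.le_add_right t k))]
  rw [hconst, discountedTail_const hδ.1.le hδ.2, h1]
  gcongr
  · exact (sub_pos.2 hδ.2).le
  · exact hwa (hs _) ⟨zero_le_one, le_rfl⟩ (hs _).2

def raiseFrom (s : ℕ → ℝ) (t₁ : ℕ) (c : ℝ) (t : ℕ) : ℝ :=
  if t < t₁ then s t else max (s t) c

section raiseFrom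

variable {t₁ t : ℕ} {c : ℝ}

theorem raiseFrom_of_lt (h : t < t₁) : raiseFrom s t₁ c t = s t := if_pos h

theorem raiseFrom_of_le (h : t₁ ≤ t) : raiseFrom s t₁ c t = max (s t) c := if_neg h.not_gt

theorem le_raiseFrom : s t ≤ raiseFrom s t₁ c t := by
  unfold raiseFrom
  split_ifs
  exacts [le_rfl, le_max_left _ _]

theorem raiseFrom_mem_Icc {a b : ℝ} (hs : ∀ n, s n ∈ Icc a b) (hc : c ≤ b) (t : ℕ) :
    raiseFrom s t₁ c t ∈ Icc a b := by
  unfold raiseFrom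
  split_ifs
  exacts [hs t, ⟨(hs t).1.trans (le_max_left _ _), max_le (hs t).2 hc⟩]

theorem Monotone.raiseFrom (hs : Monotone s) : Monotone (raiseFrom s t₁ c) := by
  intro m n hmn
  unfold _root_.raiseFrom
  split_ifs with hm hn hn
  · exact hs hmn
  · exact (hs hmn).trans (le_max_left _ _)
  · omega
  · exact max_le_max (hs hmn) le_rfl

end raiseFrom

/-- After `t₁` the constraints only gain: along the raised path the outside option `w` falls
and the surplus `π + w` rises. -/
theorem FrontloadedIC.raiseFrom (hIC : FrontloadedIC δ π w s) (hδ : δ ∈ Ioo 0 1)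
    (hπc : ContinuousOn π (Icc 0 1)) (hwc : ContinuousOn w (Icc 0 1))
    (hwa : AntitoneOn w (Icc 0 1)) (hGm : MonotoneOn (fun x => π x + w x) (Icc 0 1))
    (hs : ∀ n, s n ∈ Icc 0 1) (hmono : Monotone s) {t₁ : ℕ} (ht₁ : 1 ≤ t₁) {c : ℝ}
    (hc : c ∈ Ioc (s t₁) 1)
    (hct : (π c + w (s (t₁ - 1))) / (1 - δ) ≤ discountedTail δ (fun n => π (s n) + w (s n)) t₁) :
    FrontloadedIC δ π w (raiseFrom s t₁ c) := by
  intro t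
  have hs' := raiseFrom_mem_Icc (t₁ := t₁) hs hc.2
  have hle := discountedTail_comp_le_of_monotoneOn hδ (hπc.add hwc) hGm hs hs' (t := t)
    fun _ _ => le_raiseFrom
  have hcIcc : c ∈ Icc 0 1 := ⟨(hs t₁).1.trans hc.1.le, hc.2⟩
  rcases lt_trichotomy t t₁ with ht | rfl | ht
  · rw [raiseFrom_of_lt ht, raiseFrom_of_lt (by omega)]
    exact (hIC t).trans hle
  · rw [raiseFrom_of_le le_rfl, max_eq_right hc.1.le, raiseFrom_of_lt (by omega)]
    exact hct.trans hle
  rcases le_or_gt c (s t) with hcs | hsc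
  · rw [raiseFrom_of_le ht.le, max_eq_left hcs]
    refine le_trans ?_ ((hIC t).trans hle)
    gcongr
    · exact (sub_pos.2 hδ.2).le
    · exact hwa (hs _) (hs' _) le_raiseFrom
  · rw [raiseFrom_of_le ht.le, max_eq_right hsc.le, raiseFrom_of_le (by omega),
      max_eq_right ((hmono (Nat.sub_le t 1)).trans hsc.le),
      ← discountedTail_const hδ.1.le hδ.2 _ t]
    refine discountedTail_comp_le_of_monotoneOn hδ (hπc.add hwc) hGm (fun _ => hcIcc) hs'
      fun n hn => ?_
    rw [raiseFrom_of_le (ht.le.trans hn)]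
    exact le_max_right _ _

/-- The witness is `raiseFrom s t₁ c` for some `c > s t₁` so close that, by continuity of `π`,
the constraint at `t₁` survives. -/
theorem exists_implementable_PiVal_payStar_gt (hδ : δ ∈ Ioo 0 1)
    (hπc : ContinuousOn π (Icc 0 1)) (hwc : ContinuousOn w (Icc 0 1))
    (hwa : AntitoneOn w (Icc 0 1)) (hGm : StrictMonoOn (fun x => π x + w x) (Icc 0 1))
    (hs : ∀ n, s n ∈ Icc 0 1) (hs0 : s 0 = 0) (hmono : Monotone s)
    (hIC : FrontloadedIC δ π w s) {t₁ : ℕ} (ht₁ : 1 ≤ t₁)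
    (hslack : (π (s t₁) + w (s (t₁ - 1))) / (1 - δ)
      < discountedTail δ (fun n => π (s n) + w (s n)) t₁) :
    ∃ s', Implementable δ π w s' (payStar δ w s') ∧
      PiVal δ π s (payStar δ w s) 0 < PiVal δ π s' (payStar δ w s') 0 := by
  have hδ1 : 0 < 1 - δ := sub_pos.2 hδ.2
  obtain ⟨c, hc, hπc_lt⟩ := hπc.exists_mem_Ioc_lt_add
    ⟨(hs t₁).1, lt_one_of_lt_discountedTail hδ hwa hs hmono hslack⟩
    (mul_pos (sub_pos.2 hslack) hδ1)
  have hct : (π c + w (s (t₁ - 1))) / (1 - δ)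
      ≤ discountedTail δ (fun n => π (s n) + w (s n)) t₁ := by
    have := div_mul_cancel₀ (π (s t₁) + w (s (t₁ - 1))) hδ1.ne'
    rw [div_le_iff₀ hδ1]
    linarith
  have hs' := raiseFrom_mem_Icc (t₁ := t₁) hs hc.2
  refine ⟨raiseFrom s t₁ c, implementable_payStar hδ hπc hwc hwa hs'
    (by rw [raiseFrom_of_lt (by omega), hs0]) hmono.raiseFrom
    (hIC.raiseFrom hδ hπc hwc hwa hGm.monotoneOn hs hmono ht₁ hc hct), ?_⟩
  rw [PiVal_payStar hδ hπc hwc hs, PiVal_payStar hδ hπc hwc hs',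
    raiseFrom_of_lt (show 0 - 1 < t₁ by omega)]
  have hsurplus := hπc.add hwc
  refine sub_lt_sub_right (discountedTail_lt_discountedTail (q := fun n => π (s n) + w (s n))
    (r := fun n => π (raiseFrom s t₁ c n) + w (raiseFrom s t₁ c n)) hδ.1
    (summable_pow_mul_comp hδ hsurplus fun k => hs (0 + k))
    (summable_pow_mul_comp hδ hsurplus fun k => hs' (0 + k))
    (fun n _ => hGm.monotoneOn (hs n) (hs' n) le_raiseFrom) (Nat.zero_le t₁) ?_) _
  rw [raiseFrom_of_le le_rfl, max_eq_right hc.1.le]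
  exact hGm (hs t₁) ⟨(hs t₁).1.trans hc.1.le, hc.2⟩ hc.1

theorem Optimal.discountedTail_le_payStar (hopt : Optimal δ π w s p) (hδ : δ ∈ Ioo 0 1)
    (hπc : ContinuousOn π (Icc 0 1)) (hwc : ContinuousOn w (Icc 0 1))
    (hwa : AntitoneOn w (Icc 0 1)) (hGm : StrictMonoOn (fun x => π x + w x) (Icc 0 1))
    (t : ℕ) : discountedTail δ p t ≤ discountedTail δ (payStar δ w s) t := by
  have himp := hopt.1
  obtain ⟨⟨hs, hs0, -⟩, hmono, -⟩ := hopt.1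
  have hIC := himp.frontloadedIC hδ hπc hwc
  have hPiVal := PiVal_eq_sub (summable_pow_mul_comp hδ hπc fun k => hs (t + k))
    (himp.summable_payment hδ.1.ne' t)
  have hPiVal_star := PiVal_eq_sub (summable_pow_mul_comp hδ hπc fun k => hs (t + k))
    (summable_payStar hδ hwc hs t)
  rcases Nat.eq_zero_or_pos t with rfl | ht
  · linarith [hopt.2 _ _ (implementable_payStar hδ hπc hwc hwa hs hs0 hmono hIC)]
  by_contra! hlt
  have hslack : (π (s t) + w (s (t - 1))) / (1 - δ)
      < discountedTail δ (fun n => π (s n) + w (s n)) t := by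
    have hP := himp.2.2.2.1 t
    rw [add_div]
    linarith [PiVal_payStar hδ hπc hwc hs t]
  obtain ⟨s', himp', hgt⟩ := exists_implementable_PiVal_payStar_gt hδ hπc hwc hwa hGm hs hs0
    hmono hIC ht hslack
  linarith [hopt.2 _ _ himp', himp.PiVal_le_PiVal_payStar hδ hπc hwc 0]

end Contracts

theorem payment_frontloading_general
    (δ : ℝ) (hδ : δ ∈ Set.Ioo (0 : ℝ) 1) (π w : ℝ → ℝ)
    (hπc : ContinuousOn π (Set.Icc 0 1)) (hwc : ContinuousOn w (Set.Icc 0 1))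
    (hwa : StrictAntiOn w (Set.Icc 0 1))
    (hGm : StrictMonoOn (fun x => π x + w x) (Set.Icc 0 1))
    (s p : ℕ → ℝ) (hopt : Optimal δ π w s p) :
    p 0 = 0 ∧ (∀ t : ℕ, 1 ≤ t → p t = (w (s (t - 1)) - w (s t)) / (1 - δ)) ∧
    p = payStar δ w s := by
  have himp := hopt.1
  have hp : p = payStar δ w s :=
    eq_of_discountedTail_eq (himp.summable_payment hδ.1.ne') (summable_payStar hδ hwc himp.1.1)
      fun t => le_antisymm (hopt.discountedTail_le_payStar hδ hπc hwc hwa.antitoneOn hGm t)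
        (himp.discountedTail_payStar_le hδ hwc t)
  subst hp
  exact ⟨by simp [payStar], fun t _ => payStar_eq δ w s t, rfl⟩

/-- Payment frontloading: any optimal contract uses the payment scheme p*(s). -/
theorem payment_frontloading
    (δ : ℝ) (hδ : δ ∈ Set.Ioo (0 : ℝ) 1) (π w : ℝ → ℝ)
    (hπc : ContinuousOn π (Set.Icc 0 1)) (hwc : ContinuousOn w (Set.Icc 0 1))
    (hπm : StrictMonoOn π (Set.Icc 0 1)) (hwa : StrictAntiOn w (Set.Icc 0 1))
    (hGm : StrictMonoOn (fun x => π x + w x) (Set.Icc 0 1))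
    (s p : ℕ → ℝ) (hopt : Optimal δ π w s p) :
    p 0 = 0 ∧ (∀ t : ℕ, 1 ≤ t → p t = (w (s (t - 1)) - w (s t)) / (1 - δ)) ∧
    p = payStar δ w s :=
  payment_frontloading_general δ hδ π w hπc hwc hwa hGm s p hopt
end
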